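/- Let ν = (N⊥/N)·Σ_{s=1}^S m^{(s)} m'^{(s)} with m^{(s)}, m'^{(s)} i.i.d. Bernoulli(ξ) independent families, N = max(Σ_s m^{(s)}, 1), N⊥ = min(Σ_s m^{(s)}, 1), θ = 1−(1−ξ)^S. Then E[ν] = ξθ (unconditionally), while if m'^{(s)} = m^{(s)} (same filter), ν = N⊥ and E[ν] = θ. -/

import Mathlib

/-! Write `k = ∑ₛ mₛ`. Since `k` is a natural number, `(N⊥ / N) · k = N⊥`, and `N⊥` is the
indicator that some `mₛ = 1`, so `E[N⊥] = 1 - ∏ₛ P(mₛ = 0) = 1 - (1 - ξ)^S`. For `ν`, each summand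
`(N⊥ / N) · mₛ · m'ₛ` is a function of the family `m` times `m'ₛ`, which is independent of `m`;
its expectation is therefore `ξ · E[(N⊥ / N) · mₛ]`, and summing back over `s` gives `ξ · E[N⊥]`. -/

open MeasureTheory ProbabilityTheory Finset

lemma min_one_div_max_one_mul_self (n : ℕ) :
    min (n : ℝ) 1 / max (n : ℝ) 1 * n = min (n : ℝ) 1 := by
  rcases n.eq_zero_or_pos with rfl | hn
  · simp
  · have h1 : (1 : ℝ) ≤ n := by exact_mod_cast hn
    rw [min_eq_right h1, max_eq_left h1, one_div_mul_cancel (by positivity)]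

section Counting

variable {ι : Type*} [Fintype ι]

lemma min_sum_div_max_sum_mul_sum (g : ι → Bool) :
    min (∑ i, if g i then (1 : ℝ) else 0) 1 / max (∑ i, if g i then (1 : ℝ) else 0) 1 *
      (∑ i, if g i then (1 : ℝ) else 0) = min (∑ i, if g i then (1 : ℝ) else 0) 1 := by
  rw [sum_boole]
  exact min_one_div_max_one_mul_self _

lemma min_sum_one_eq_one_sub (g : ι → Bool) :
    min (∑ i, if g i then (1 : ℝ) else 0) 1 = 1 - if ∀ i, g i = false then 1 else 0 := by
  rw [sum_boole]
  by_cases h : ∀ i, g i = false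
  · simp [h]
  · obtain ⟨i, hi⟩ : ∃ i, g i = true := by simpa using h
    have h1 : (1 : ℝ) ≤ (#{i | g i = true} : ℕ) :=
      Nat.one_le_cast.mpr (card_pos.mpr ⟨i, by simp [hi]⟩)
    simp [h, min_eq_right h1]

end Counting

namespace ProbabilityTheory

variable {Ω : Type*} [MeasurableSpace Ω] {μ : Measure Ω}

lemma integrable_comp_of_finite [IsFiniteMeasure μ] {α : Type*} [MeasurableSpace α] [Finite α]
    [MeasurableSingletonClass α] {F : Ω → α} (hF : Measurable F) (φ : α → ℝ) :
    Integrable (fun ω ↦ φ (F ω)) μ :=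
  Integrable.of_finite.comp_measurable hF

lemma integral_ite_one_zero {p : Ω → Prop} [DecidablePred p] (hp : MeasurableSet {ω | p ω}) :
    ∫ ω, (if p ω then (1 : ℝ) else 0) ∂μ = μ.real {ω | p ω} := by
  rw [← integral_indicator_one hp]
  simp only [Set.indicator_apply, Set.mem_ofPred_eq, Pi.one_apply]

lemma iIndepFun.indepFun_inl_inr {ι κ β : Type*} [Fintype ι] [Fintype κ] [MeasurableSpace β]
    {f : ι ⊕ κ → Ω → β} (hf : iIndepFun f μ) (hmeas : ∀ i, Measurable (f i)) :
    IndepFun (fun ω i ↦ f (Sum.inl i) ω) (fun ω j ↦ f (Sum.inr j) ω) μ := by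
  have h := hf.indepFun_finset (univ.map .inl) (univ.map .inr)
    (disjoint_left.mpr (by simp)) hmeas
  exact h.comp (φ := fun v i ↦ v ⟨.inl i, by simp⟩) (ψ := fun v j ↦ v ⟨.inr j, by simp⟩)
    (measurable_pi_lambda _ fun _ ↦ measurable_pi_apply _)
    (measurable_pi_lambda _ fun _ ↦ measurable_pi_apply _)

lemma measureReal_setOf_eq_false {b : Ω → Bool} [IsProbabilityMeasure μ] (hb : Measurable b) :
    μ.real {ω | b ω = false} = 1 - μ.real {ω | b ω = true} := by
  have h := probReal_compl_eq_one_sub (μ := μ) (hb (measurableSet_singleton true))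
  have hc : (b ⁻¹' {true})ᶜ = {ω | b ω = false} := by ext ω; simp
  rw [hc] at h
  exact h

lemma iIndepFun.measureReal_forall_eq_false {ι : Type*} [Fintype ι] {g : ι → Ω → Bool}
    [IsProbabilityMeasure μ] (hg : iIndepFun g μ) (hmeas : ∀ i, Measurable (g i)) :
    μ.real {ω | ∀ i, g i ω = false} = ∏ i, (1 - μ.real {ω | g i ω = true}) := by
  have h := hg.meas_iInter (s := fun i ↦ g i ⁻¹' {false})
    fun i ↦ ⟨{false}, measurableSet_singleton _, rfl⟩
  calc μ.real {ω | ∀ i, g i ω = false} = μ.real (⋂ i, g i ⁻¹' {false}) := by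
        rw [Set.ofPred_forall]; rfl
    _ = ∏ i, μ.real (g i ⁻¹' {false}) := by simp only [measureReal_def, h, ENNReal.toReal_prod]
    _ = ∏ i, (1 - μ.real {ω | g i ω = true}) :=
        prod_congr rfl fun i _ ↦ measureReal_setOf_eq_false (hmeas i)

lemma iIndepFun.integral_min_sum_one {ι : Type*} [Fintype ι] {g : ι → Ω → Bool}
    [IsProbabilityMeasure μ] (hg : iIndepFun g μ) (hmeas : ∀ i, Measurable (g i)) :
    ∫ ω, min (∑ i, if g i ω then (1 : ℝ) else 0) 1 ∂μ =
      1 - ∏ i, (1 - μ.real {ω | g i ω = true}) := by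
  have hall : Measurable fun ω i ↦ g i ω := measurable_pi_lambda _ hmeas
  have hint : Integrable (fun ω ↦ if ∀ i, g i ω = false then (1 : ℝ) else 0) μ :=
    integrable_comp_of_finite hall fun v ↦ if ∀ i, v i = false then 1 else 0
  have hset : MeasurableSet {ω | ∀ i, g i ω = false} :=
    hall (t := {v | ∀ i, v i = false}) (Set.toFinite _).measurableSet
  simp_rw [min_sum_one_eq_one_sub]
  rw [integral_sub (integrable_const 1) hint, integral_const, integral_ite_one_zero hset,
    hg.measureReal_forall_eq_false hmeas]
  simp

lemma IndepFun.integral_mul_sum_and {ι : Type*} [Fintype ι] [IsProbabilityMeasure μ]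
    {a b : ι → Ω → Bool} (hab : IndepFun (fun ω i ↦ a i ω) (fun ω i ↦ b i ω) μ)
    (ha : ∀ i, Measurable (a i)) (hb : ∀ i, Measurable (b i)) {ξ : ℝ}
    (hξ : ∀ i, μ.real {ω | b i ω = true} = ξ) (φ : (ι → Bool) → ℝ) :
    ∫ ω, φ (fun i ↦ a i ω) * ∑ i, (if a i ω ∧ b i ω then (1 : ℝ) else 0) ∂μ =
      ξ * ∫ ω, φ (fun i ↦ a i ω) * ∑ i, (if a i ω then (1 : ℝ) else 0) ∂μ := by
  set A : Ω → ι → Bool := fun ω i ↦ a i ω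
  have hA : Measurable A := measurable_pi_lambda _ ha
  have hB : Measurable fun ω i ↦ b i ω := measurable_pi_lambda _ hb
  have hterm : ∀ i, ∫ ω, φ (A ω) * (if a i ω then 1 else 0) * (if b i ω then 1 else 0) ∂μ =
      (∫ ω, φ (A ω) * (if a i ω then 1 else 0) ∂μ) * ξ := by
    intro i
    rw [← hξ i,
      ← integral_ite_one_zero (p := fun ω ↦ b i ω = true) (hb i (measurableSet_singleton true))]
    exact hab.integral_fun_comp_mul_comp (f := fun v ↦ φ v * if v i then 1 else 0)
      (g := fun v ↦ if v i then 1 else 0) hA.aemeasurable hB.aemeasurable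
      (measurable_of_countable _).aestronglyMeasurable
      (measurable_of_countable _).aestronglyMeasurable
  have hint : ∀ i, Integrable (fun ω ↦ φ (A ω) * if a i ω then 1 else 0) μ := fun i ↦
    integrable_comp_of_finite hA fun v ↦ φ v * if v i then 1 else 0
  calc ∫ ω, φ (A ω) * ∑ i, (if a i ω ∧ b i ω then (1 : ℝ) else 0) ∂μ
      = ∫ ω, ∑ i, φ (A ω) * (if a i ω then 1 else 0) * (if b i ω then 1 else 0) ∂μ := by
        congr 1
        ext ω
        rw [mul_sum]
        refine sum_congr rfl fun i _ ↦ ?_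
        cases a i ω <;> cases b i ω <;> simp
    _ = ∑ i, (∫ ω, φ (A ω) * (if a i ω then 1 else 0) ∂μ) * ξ := by
        rw [integral_finsetSum _ fun i _ ↦
          integrable_comp_of_finite (hA.prodMk hB) fun v ↦ φ v.1 * (if v.1 i then 1 else 0) *
            if v.2 i then 1 else 0]
        exact sum_congr rfl fun i _ ↦ hterm i
    _ = ξ * ∫ ω, φ (A ω) * ∑ i, (if a i ω then (1 : ℝ) else 0) ∂μ := by
        simp_rw [mul_sum]
        rw [integral_finsetSum _ fun i _ ↦ hint i, ← sum_mul, mul_comm]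

end ProbabilityTheory

theorem stmt_4_general {Ω : Type*} [MeasurableSpace Ω] (μ : Measure Ω) [IsProbabilityMeasure μ]
    (ξ : ℝ) (hξ0 : 0 < ξ) (S : ℕ)
    (f : (Fin S ⊕ Fin S) → Ω → Bool)
    (hmeas : ∀ i, Measurable (f i))
    (hindep : iIndepFun f μ)
    (hbern : ∀ i, μ {ω | f i ω = true} = ENNReal.ofReal ξ)
    (m m' : Fin S → Ω → Bool) (hm : m = fun s => f (Sum.inl s))
    (hm' : m' = fun s => f (Sum.inr s))
    (Nperp N ν : Ω → ℝ)
    (hNperp : Nperp = fun ω => min (∑ s, (if m s ω then (1:ℝ) else 0)) 1)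
    (hN : N = fun ω => max (∑ s, (if m s ω then (1:ℝ) else 0)) 1)
    (hν : ν = fun ω => Nperp ω / N ω * ∑ s, (if m s ω ∧ m' s ω then (1:ℝ) else 0)) :
    (∫ ω, ν ω ∂μ = ξ * (1 - (1 - ξ) ^ S)) ∧
    (∀ ω, Nperp ω / N ω * (∑ s, (if m s ω ∧ m s ω then (1:ℝ) else 0)) = Nperp ω) ∧
    (∫ ω, Nperp ω ∂μ = 1 - (1 - ξ) ^ S) := by
  subst hm hm' hNperp hN hν
  have hξ : ∀ i, μ.real {ω | f i ω = true} = ξ := fun i ↦ by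
    rw [measureReal_def, hbern, ENNReal.toReal_ofReal hξ0.le]
  have hNperp_integral : ∫ ω, min (∑ s, if f (.inl s) ω then (1 : ℝ) else 0) 1 ∂μ =
      1 - (1 - ξ) ^ S := by
    rw [(hindep.precomp Sum.inl_injective).integral_min_sum_one fun _ ↦ hmeas _]
    simp [hξ]
  have hν_integral := (hindep.indepFun_inl_inr hmeas).integral_mul_sum_and
    (fun _ ↦ hmeas _) (fun _ ↦ hmeas _) (fun _ ↦ hξ _)
    fun v ↦ min (∑ s, if v s then (1 : ℝ) else 0) 1 / max (∑ s, if v s then (1 : ℝ) else 0) 1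
  refine ⟨?_, fun ω ↦ ?_, hNperp_integral⟩
  · simp only at hν_integral
    rw [hν_integral]
    simp_rw [min_sum_div_max_sum_mul_sum, hNperp_integral]
  · simp only [and_self]
    exact min_sum_div_max_sum_mul_sum _

/-- With m, m' two independent i.i.d. Bernoulli(ξ) families over S subnetworks,
θ = 1 − (1−ξ)^S, N⊥ = min(Σ_s m_s, 1), N = max(Σ_s m_s, 1), and
ν = (N⊥/N)·Σ_s m_s m'_s, we have E[ν] = ξθ; moreover, for the same filter
(m' replaced by m) the mixing coefficient equals N⊥ and E[N⊥] = θ. -/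
theorem stmt_4 {Ω : Type*} [MeasurableSpace Ω] (μ : Measure Ω) [IsProbabilityMeasure μ]
    (ξ : ℝ) (hξ0 : 0 < ξ) (hξ1 : ξ ≤ 1) (S : ℕ) (hS : 1 ≤ S)
    (f : (Fin S ⊕ Fin S) → Ω → Bool)
    (hmeas : ∀ i, Measurable (f i))
    (hindep : iIndepFun f μ)
    (hbern : ∀ i, μ {ω | f i ω = true} = ENNReal.ofReal ξ)
    (m m' : Fin S → Ω → Bool) (hm : m = fun s => f (Sum.inl s))
    (hm' : m' = fun s => f (Sum.inr s))
    (Nperp N ν : Ω → ℝ)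
    (hNperp : Nperp = fun ω => min (∑ s, (if m s ω then (1:ℝ) else 0)) 1)
    (hN : N = fun ω => max (∑ s, (if m s ω then (1:ℝ) else 0)) 1)
    (hν : ν = fun ω => Nperp ω / N ω * ∑ s, (if m s ω ∧ m' s ω then (1:ℝ) else 0)) :
    (∫ ω, ν ω ∂μ = ξ * (1 - (1 - ξ) ^ S)) ∧
    (∀ ω, Nperp ω / N ω * (∑ s, (if m s ω ∧ m s ω then (1:ℝ) else 0)) = Nperp ω) ∧
    (∫ ω, Nperp ω ∂μ = 1 - (1 - ξ) ^ S) :=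
  stmt_4_general μ ξ hξ0 S f hmeas hindep hbern m m' hm hm' Nperp N ν hNperp hN hν
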